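/- arXiv:2302.11898 — 3 statements merged into one kernel-verified Lean document; each statement's English description precedes it below -/
import Mathlib

section
/- (The trajectory must leave the feasible set.) Let ζ ∈ [0,1) and let x : ℝ → E be a GDAM trajectory defined for all t ≥ 0, i.e. x'(t) = s_ζ(x(t)) with ∇f(x(t)) ≠ 0 and ∇g(x(t)) ≠ 0 for all t ≥ 0. If there is A > 0 with ‖∇f(x(t))‖ ≥ A for all t ≥ 0, then f(x(t)) ≤ f(x(0)) − A(1 − ζ)t for every t ≥ 0; consequently f(x(t)) → −∞ as t → ∞, so t ↦ f(x(t)) cannot be bounded below. -/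
/-! By the chain rule and Cauchy–Schwarz, along the flow
`d/dt f(x t) = -‖∇f‖ - ζ ⟪∇f, ∇g / ‖∇g‖⟫ ≤ -(1 - ζ) ‖∇f‖ ≤ -A (1 - ζ)`,
so `f ∘ x` decreases at least linearly with slope `A (1 - ζ) > 0`. -/

open RealInnerProductSpace Filter

section GDAM

variable {F : Type*} [NormedAddCommGroup F] [InnerProductSpace ℝ F]

/-- `s_ζ(y)`, written in terms of `u = ∇f(y)` and `v = ∇g(y)`. -/
noncomputable def gdamDirection (ζ : ℝ) (u v : F) : F :=
  -(‖u‖⁻¹ • u) - ζ • (‖v‖⁻¹ • v)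

theorem real_inner_inv_norm_smul_self (u : F) : ⟪u, ‖u‖⁻¹ • u⟫ = ‖u‖ := by
  rw [real_inner_smul_right, real_inner_self_eq_norm_sq, sq, ← mul_assoc, inv_mul_mul_self]

theorem neg_norm_le_real_inner_inv_norm_smul (u v : F) : -‖u‖ ≤ ⟪u, ‖v‖⁻¹ • v⟫ := by
  have hunit : ‖‖v‖⁻¹ • v‖ ≤ 1 := mem_closedBall_zero_iff.1 (inv_norm_smul_mem_unitClosedBall v)
  calc -‖u‖ ≤ -(‖u‖ * ‖‖v‖⁻¹ • v‖) := by
        nlinarith [mul_le_mul_of_nonneg_left hunit (norm_nonneg u)]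
    _ ≤ ⟪u, ‖v‖⁻¹ • v⟫ := neg_le_of_abs_le (abs_real_inner_le_norm _ _)

theorem real_inner_gdamDirection_le {ζ : ℝ} (hζ : 0 ≤ ζ) (u v : F) :
    ⟪u, gdamDirection ζ u v⟫ ≤ -((1 - ζ) * ‖u‖) := by
  have hcs := mul_le_mul_of_nonneg_left (neg_norm_le_real_inner_inv_norm_smul u v) hζ
  rw [gdamDirection, inner_sub_right, inner_neg_right, real_inner_inv_norm_smul_self,
    real_inner_smul_right]
  linarith

theorem DifferentiableAt.hasDerivAt_comp_inner_gradient [CompleteSpace F] {f : F → ℝ}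
    {x : ℝ → F} {x' : F} {t : ℝ} (hf : DifferentiableAt ℝ f (x t)) (hx : HasDerivAt x x' t) :
    HasDerivAt (fun s => f (x s)) ⟪gradient f (x t), x'⟫ t := by
  rw [gradient, InnerProductSpace.toDual_symm_apply]
  exact hf.hasFDerivAt.comp_hasDerivAt t hx

end GDAM

theorem le_sub_mul_of_hasDerivAt_le {φ φ' : ℝ → ℝ} {c : ℝ}
    (hφ : ∀ t, 0 ≤ t → HasDerivAt φ (φ' t) t) (hle : ∀ t, 0 ≤ t → φ' t ≤ -c)
    {t : ℝ} (ht : 0 ≤ t) : φ t ≤ φ 0 - c * t := by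
  have hmvt := (convex_Ici (0 : ℝ)).image_sub_le_mul_sub_of_deriv_le
    (fun s hs => (hφ s hs).continuousAt.continuousWithinAt)
    (fun s hs => (hφ s (interior_subset hs)).differentiableAt.differentiableWithinAt)
    (fun s hs => (hφ s (interior_subset hs)).deriv ▸ hle s (interior_subset hs))
    0 Set.self_mem_Ici t ht ht
  linarith

theorem tendsto_atBot_of_le_sub_mul {u : ℝ → ℝ} {a c : ℝ} (hc : 0 < c)
    (hu : ∀ t, 0 ≤ t → u t ≤ a - c * t) : Tendsto u atTop atBot := by
  have hline : Tendsto (fun t => a - c * t) atTop atBot :=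
    tendsto_atBot_add_const_left _ a
      (tendsto_neg_atBot_iff.2 (tendsto_id.const_mul_atTop hc))
  exact tendsto_atBot_mono' atTop ((eventually_ge_atTop 0).mono hu) hline

theorem not_bddBelow_image_Ici_of_tendsto_atBot {u : ℝ → ℝ} (a : ℝ)
    (hu : Tendsto u atTop atBot) : ¬BddBelow (u '' Set.Ici a) := by
  rw [Set.image_eq_range]
  exact not_bddBelow_of_tendsto_atBot (tendsto_comp_val_Ici_atTop.2 hu)

theorem gdam_leaves_feasible_set_general {n : ℕ}
    (f g : EuclideanSpace ℝ (Fin n) → ℝ)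
    (hf : ContDiff ℝ 2 f)
    (ζ : ℝ) (hζ : ζ ∈ Set.Ico (0 : ℝ) 1)
    (x : ℝ → EuclideanSpace ℝ (Fin n))
    (hx : ∀ t : ℝ, 0 ≤ t → HasDerivAt x
      (-(‖gradient f (x t)‖⁻¹ • gradient f (x t))
        - ζ • (‖gradient g (x t)‖⁻¹ • gradient g (x t))) t)
    (A : ℝ) (hA : 0 < A)
    (hlow : ∀ t : ℝ, 0 ≤ t → A ≤ ‖gradient f (x t)‖) :
    (∀ t : ℝ, 0 ≤ t → f (x t) ≤ f (x 0) - A * (1 - ζ) * t) ∧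
      Tendsto (fun t => f (x t)) atTop atBot ∧
      ¬ BddBelow ((fun t => f (x t)) '' Set.Ici (0 : ℝ)) := by
  obtain ⟨hζ0, hζ1⟩ := hζ
  have hslope : ∀ t, 0 ≤ t →
      ⟪gradient f (x t), gdamDirection ζ (gradient f (x t)) (gradient g (x t))⟫
        ≤ -(A * (1 - ζ)) := fun t ht =>
    (real_inner_gdamDirection_le hζ0 _ _).trans (by nlinarith [hlow t ht])
  have hdecay : ∀ t, 0 ≤ t → f (x t) ≤ f (x 0) - A * (1 - ζ) * t := fun t =>
    le_sub_mul_of_hasDerivAt_le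
      (fun s hs => (hf.differentiable (by norm_num) _).hasDerivAt_comp_inner_gradient (hx s hs))
      hslope
  have htendsto := tendsto_atBot_of_le_sub_mul (mul_pos hA (sub_pos.2 hζ1)) hdecay
  exact ⟨hdecay, htendsto, not_bddBelow_image_Ici_of_tendsto_atBot 0 htendsto⟩

/-- The trajectory must leave the feasible set: if `‖∇f(x(t))‖ ≥ A > 0`
along a GDAM trajectory defined for all `t ≥ 0`, then
`f(x(t)) ≤ f(x(0)) - A(1-ζ)t`, hence `f(x(t)) → -∞` and `t ↦ f(x(t))` is not
bounded below. -/
theorem gdam_leaves_feasible_set {n : ℕ}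
    (f g : EuclideanSpace ℝ (Fin n) → ℝ)
    (hf : ContDiff ℝ 2 f) (hg : ContDiff ℝ 2 g)
    (ζ : ℝ) (hζ : ζ ∈ Set.Ico (0 : ℝ) 1)
    (x : ℝ → EuclideanSpace ℝ (Fin n))
    (hgf : ∀ t : ℝ, 0 ≤ t → gradient f (x t) ≠ 0)
    (hgg : ∀ t : ℝ, 0 ≤ t → gradient g (x t) ≠ 0)
    (hx : ∀ t : ℝ, 0 ≤ t → HasDerivAt x
      (-(‖gradient f (x t)‖⁻¹ • gradient f (x t))
        - ζ • (‖gradient g (x t)‖⁻¹ • gradient g (x t))) t)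
    (A : ℝ) (hA : 0 < A)
    (hlow : ∀ t : ℝ, 0 ≤ t → A ≤ ‖gradient f (x t)‖) :
    (∀ t : ℝ, 0 ≤ t → f (x t) ≤ f (x 0) - A * (1 - ζ) * t) ∧
      Tendsto (fun t => f (x t)) atTop atBot ∧
      ¬ BddBelow ((fun t => f (x t)) '' Set.Ici (0 : ℝ)) :=
  gdam_leaves_feasible_set_general f g hf ζ hζ x hx A hA hlow
end

section
/- (Error bound at the solution point.) Let ζ ∈ [0,1) and let x : ℝ → E be a GDAM trajectory on [0,t♯], i.e. x'(t) = s_ζ(x(t)) with ∇f(x(t)) ≠ 0 and ∇g(x(t)) ≠ 0 on [0,t♯]. Suppose g(x(t)) < 0 for all t ∈ [0,t♯) and g(x(t♯)) = 0, and write x♯ = x(t♯). Then the solution error satisfies ε(x♯) = ‖∇f(x♯)/‖∇f(x♯)‖ + ∇g(x♯)/‖∇g(x♯)‖‖ ≤ √(2(1 − ζ)). -/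
/-!
Write `u, v` for the normalized gradients of `f, g` at `x♯` and `w = -u - ζ v` for the
velocity there. Since `g ∘ x` is negative before `t♯` and vanishes at `t♯`, its derivative
`⟪∇g(x♯), w⟫ = ‖∇g(x♯)‖ ⟪v, w⟫` is nonnegative, and for unit vectors
`‖u + v‖² = 2(1 - ζ) - 2⟪v, w⟫`.
-/

open RealInnerProductSpace

theorem HasGradientAt.comp_hasDerivAt {F : Type*} [NormedAddCommGroup F] [InnerProductSpace ℝ F]
    [CompleteSpace F] {g : F → ℝ} {g' : F} {x : ℝ → F} {x' : F} {t : ℝ}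
    (hg : HasGradientAt g g' (x t)) (hx : HasDerivAt x x' t) :
    HasDerivAt (fun s => g (x s)) ⟪g', x'⟫ t := by
  simpa [Function.comp_def] using hg.hasFDerivAt.comp_hasDerivAt t hx

theorem HasDerivWithinAt.nonneg_of_isMaxOn_Icc {φ : ℝ → ℝ} {φ' a b : ℝ} (hab : a < b)
    (hφ : HasDerivWithinAt φ φ' (Set.Icc a b) b) (hmax : IsMaxOn φ (Set.Icc a b) b) :
    0 ≤ φ' := by
  have hcone : a - b ∈ posTangentConeAt (Set.Icc a b) b :=
    sub_mem_posTangentConeAt_of_segment_subset <| by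
      rw [segment_symm]; exact segment_subset_Icc hab.le
  have := hmax.localize.hasFDerivWithinAt_nonpos hφ.hasFDerivWithinAt hcone
  simp only [ContinuousLinearMap.toSpanSingleton_apply, smul_eq_mul] at this
  nlinarith

section UnitVectors

variable {F : Type*} [NormedAddCommGroup F] [InnerProductSpace ℝ F] {u v : F}

theorem norm_add_sq_eq_of_norm_eq_one (hu : ‖u‖ = 1) (hv : ‖v‖ = 1) (ζ : ℝ) :
    ‖u + v‖ ^ 2 = 2 * (1 - ζ) - 2 * ⟪v, -u - ζ • v⟫ := by
  rw [norm_add_sq_real, inner_sub_right, inner_neg_right, real_inner_smul_right,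
    real_inner_self_eq_norm_sq, real_inner_comm, hu, hv]
  ring

theorem norm_add_le_sqrt_of_inner_nonneg (hu : ‖u‖ = 1) (hv : ‖v‖ = 1) {ζ : ℝ}
    (h : 0 ≤ ⟪v, -u - ζ • v⟫) : ‖u + v‖ ≤ √(2 * (1 - ζ)) := by
  rw [← Real.sqrt_sq (norm_nonneg (u + v))]
  exact Real.sqrt_le_sqrt (by linarith [norm_add_sq_eq_of_norm_eq_one hu hv ζ])

end UnitVectors

theorem gdam_solution_error_bound_general {n : ℕ}
    (f g : EuclideanSpace ℝ (Fin n) → ℝ)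
    (hg : ContDiff ℝ 2 g)
    (ζ : ℝ)
    (tsharp : ℝ) (ht : 0 < tsharp)
    (x : ℝ → EuclideanSpace ℝ (Fin n))
    (hgf : ∀ t ∈ Set.Icc (0 : ℝ) tsharp, gradient f (x t) ≠ 0)
    (hgg : ∀ t ∈ Set.Icc (0 : ℝ) tsharp, gradient g (x t) ≠ 0)
    (hx : ∀ t ∈ Set.Icc (0 : ℝ) tsharp, HasDerivAt x
      (-(‖gradient f (x t)‖⁻¹ • gradient f (x t))
        - ζ • (‖gradient g (x t)‖⁻¹ • gradient g (x t))) t)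
    (hneg : ∀ t ∈ Set.Ico (0 : ℝ) tsharp, g (x t) < 0)
    (hzero : g (x tsharp) = 0) :
    ‖(‖gradient f (x tsharp)‖⁻¹ • gradient f (x tsharp))
        + (‖gradient g (x tsharp)‖⁻¹ • gradient g (x tsharp))‖
      ≤ Real.sqrt (2 * (1 - ζ)) := by
  have hend : tsharp ∈ Set.Icc (0 : ℝ) tsharp := ⟨ht.le, le_rfl⟩
  have hmax : IsMaxOn (fun t => g (x t)) (Set.Icc 0 tsharp) tsharp := by
    refine isMaxOn_iff.mpr fun t ⟨h0t, hts⟩ => ?_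
    rcases hts.lt_or_eq with hlt | rfl
    · exact (hneg t ⟨h0t, hlt⟩).le.trans hzero.ge
    · exact le_rfl
  have hgrad : HasGradientAt g (gradient g (x tsharp)) (x tsharp) :=
    (hg.differentiable (by norm_num)).differentiableAt.hasGradientAt
  have hderiv := ((hgrad.comp_hasDerivAt (hx tsharp hend)).hasDerivWithinAt).nonneg_of_isMaxOn_Icc
    ht hmax
  refine norm_add_le_sqrt_of_inner_nonneg (norm_smul_inv_norm (hgf tsharp hend))
    (norm_smul_inv_norm (hgg tsharp hend)) ?_
  rw [real_inner_smul_left]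
  exact mul_nonneg (by positivity) hderiv

/-- Error bound at the solution point: at the first intersection
`x♯ = x(t♯)` of a GDAM trajectory with the constraint boundary, the solution
error satisfies `ε(x♯) = ‖∇f(x♯)/‖∇f(x♯)‖ + ∇g(x♯)/‖∇g(x♯)‖‖ ≤ √(2(1-ζ))`. -/
theorem gdam_solution_error_bound {n : ℕ}
    (f g : EuclideanSpace ℝ (Fin n) → ℝ)
    (hf : ContDiff ℝ 2 f) (hg : ContDiff ℝ 2 g)
    (ζ : ℝ) (hζ : ζ ∈ Set.Ico (0 : ℝ) 1)
    (tsharp : ℝ) (ht : 0 < tsharp)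
    (x : ℝ → EuclideanSpace ℝ (Fin n))
    (hgf : ∀ t ∈ Set.Icc (0 : ℝ) tsharp, gradient f (x t) ≠ 0)
    (hgg : ∀ t ∈ Set.Icc (0 : ℝ) tsharp, gradient g (x t) ≠ 0)
    (hx : ∀ t ∈ Set.Icc (0 : ℝ) tsharp, HasDerivAt x
      (-(‖gradient f (x t)‖⁻¹ • gradient f (x t))
        - ζ • (‖gradient g (x t)‖⁻¹ • gradient g (x t))) t)
    (hneg : ∀ t ∈ Set.Ico (0 : ℝ) tsharp, g (x t) < 0)
    (hzero : g (x tsharp) = 0) :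
    ‖(‖gradient f (x tsharp)‖⁻¹ • gradient f (x tsharp))
        + (‖gradient g (x tsharp)‖⁻¹ • gradient g (x tsharp))‖
      ≤ Real.sqrt (2 * (1 - ζ)) :=
  gdam_solution_error_bound_general f g hg ζ tsharp ht x hgf hgg hx hneg hzero
end

section
/- (Global convergence to critical points, gradient-vanishing form of the main theorem.) Let ζ ∈ [0,1) and let y : [0,∞) → E satisfy the Y-system y'(τ) = ‖∇f(y(τ))‖ · s_ζ(y(τ)) for all τ ≥ 0, with ∇f(y(τ)) ≠ 0 and ∇g(y(τ)) ≠ 0 along the trajectory. Suppose (i) there is M > 0 with f(y(τ)) ≥ f(y(0)) − M for all τ ≥ 0, and (ii) the function τ ↦ ‖∇f(y(τ))‖ is Lipschitz continuous on [0,∞) with some constant l > 0. Then lim_{τ→∞} ‖∇f(y(τ))‖ = 0, i.e. the trajectory approaches the set of critical points of the objective function f. -/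
/-!
The objective decreases along the Y-system at rate at least `(1 - ζ) ‖∇f‖²`: the first term of
`‖∇f‖ s_ζ` contributes exactly `-‖∇f‖²` to `d/dτ f(y τ)`, the second, a vector of length at most
`ζ ‖∇f‖`, at most `ζ ‖∇f‖²`. Since `f (y τ) ≥ f (y 0) - M`, this gives
`∫₀^∞ ‖∇f(y τ)‖² dτ ≤ M / (1 - ζ)`. A Lipschitz function `h` on `[0, ∞)` with `∫₀^∞ h² < ∞` tends
to zero (Barbalat): `|h τ| ≥ ε` forces `|h| ≥ ε / 2` on a window of fixed width around `τ`, while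
the integrals of `h²` over such windows tend to zero.
-/

open RealInnerProductSpace Filter MeasureTheory Set NNReal Topology

section Barbalat

variable {h : ℝ → ℝ}

theorem mul_sq_le_integral_sq {a b m : ℝ} (hab : a ≤ b) (hm : 0 ≤ m)
    (hint : IntervalIntegrable (fun t => h t ^ 2) volume a b) (hle : ∀ t ∈ Icc a b, m ≤ |h t|) :
    (b - a) * m ^ 2 ≤ ∫ t in a..b, h t ^ 2 := by
  calc (b - a) * m ^ 2 = ∫ _ in a..b, m ^ 2 := by simp
    _ ≤ ∫ t in a..b, h t ^ 2 :=
      intervalIntegral.integral_mono_on hab intervalIntegrable_const hint fun t ht =>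
        sq_abs (h t) ▸ pow_le_pow_left₀ hm (hle t ht) 2

theorem tendsto_integral_window_of_integrableOn_Ioi {u : ℝ → ℝ} {a : ℝ}
    (hu : IntegrableOn u (Ioi a)) (δ : ℝ) :
    Tendsto (fun τ => ∫ t in (τ - δ)..(τ + δ), u t) atTop (𝓝 0) := by
  have hF (c : ℝ) := intervalIntegral_tendsto_integral_Ioi a hu
    (tendsto_atTop_add_const_right atTop c tendsto_id)
  have hint {b : ℝ} (hb : a ≤ b) : IntervalIntegrable u volume a b :=
    (intervalIntegrable_iff_integrableOn_Ioc_of_le hb).2 (hu.mono_set Ioc_subset_Ioi_self)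
  refine (sub_self (∫ t in Ioi a, u t) ▸ (hF δ).sub (hF (-δ))).congr' ?_
  filter_upwards [eventually_ge_atTop (a + |δ|)] with τ hτ
  simp only [id, ← sub_eq_add_neg]
  exact intervalIntegral.integral_interval_sub_left
    (hint (by linarith [neg_abs_le δ])) (hint (by linarith [le_abs_self δ]))

theorem tendsto_atTop_zero_of_lipschitzOnWith_of_integral_sq_le {K : ℝ≥0}
    (hh : LipschitzOnWith K h (Ici 0)) {C : ℝ} (hC : ∀ T, 0 ≤ T → ∫ t in 0..T, h t ^ 2 ≤ C) :
    Tendsto h atTop (𝓝 0) := by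
  have hcont : ContinuousOn (fun t => h t ^ 2) (Ici 0) := hh.continuousOn.pow 2
  have hIoi : IntegrableOn (fun t => h t ^ 2) (Ioi 0) := by
    refine integrableOn_Ioi_of_intervalIntegral_norm_bounded C 0
      (fun T => (hcont.mono Icc_subset_Ici_self).integrableOn_Icc.mono_set Ioc_subset_Icc_self)
      tendsto_id ?_
    filter_upwards [eventually_ge_atTop 0] with T hT
    simpa only [id, Real.norm_eq_abs, abs_sq] using hC T hT
  rw [Metric.tendsto_nhds]
  intro ε hε
  obtain ⟨δ, hδ, hKδ⟩ := exists_pos_mul_lt (half_pos hε) K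
  have hwindow := tendsto_integral_window_of_integrableOn_Ioi hIoi δ
  filter_upwards [hwindow.eventually (gt_mem_nhds (by positivity : 0 < 2 * δ * (ε / 2) ^ 2)),
    eventually_ge_atTop δ] with τ hτ hτδ
  rw [Real.dist_0_eq_abs]
  by_contra! hτε
  have hlow : ∀ t ∈ Icc (τ - δ) (τ + δ), ε / 2 ≤ |h t| := fun t ht => by
    have hdist := hh.dist_le_mul τ (show 0 ≤ τ by linarith) t (show 0 ≤ t by linarith [ht.1])
    rw [Real.dist_eq, Real.dist_eq] at hdist
    have : |τ - t| ≤ δ := abs_le.2 ⟨by linarith [ht.2], by linarith [ht.1]⟩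
    have : |h τ - h t| ≤ ε / 2 :=
      hdist.trans <| (mul_le_mul_of_nonneg_left this K.2).trans hKδ.le
    linarith [abs_sub_abs_le_abs_sub (h τ) (h t)]
  have hint : IntervalIntegrable (fun t => h t ^ 2) volume (τ - δ) (τ + δ) :=
    ContinuousOn.intervalIntegrable_of_Icc (by linarith)
      (hcont.mono fun t ht => show (0 : ℝ) ≤ t by linarith [ht.1])
  have := mul_sq_le_integral_sq (by linarith) (by positivity) hint hlow
  linarith

end Barbalat

section GDAM

variable {E : Type*} [NormedAddCommGroup E] [InnerProductSpace ℝ E]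

theorem inner_smul_neg_normalize_sub_le (a b : E) {ζ : ℝ} (hζ : 0 ≤ ζ) :
    ⟪a, ‖a‖ • (-(‖a‖⁻¹ • a) - ζ • (‖b‖⁻¹ • b))⟫ ≤ -(1 - ζ) * ‖a‖ ^ 2 := by
  have ha : ‖a‖ • (‖a‖⁻¹ • a) = a := by
    rcases eq_or_ne a 0 with rfl | ha
    · simp
    · rw [smul_smul, mul_inv_cancel₀ (norm_ne_zero_iff.2 ha), one_smul]
  have hb : ‖‖b‖⁻¹ • b‖ ≤ 1 := by
    rw [norm_smul, norm_inv, norm_norm]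
    exact inv_mul_le_one_of_le₀ le_rfl (norm_nonneg b)
  have hab : -‖a‖ ≤ ⟪a, ‖b‖⁻¹ • b⟫ :=
    (neg_le_neg (mul_le_of_le_one_right (norm_nonneg a) hb)).trans
      (neg_le_of_abs_le (abs_real_inner_le_norm a _))
  rw [smul_sub, smul_neg, ha, smul_comm, inner_sub_right, inner_neg_right,
    real_inner_self_eq_norm_sq, real_inner_smul_right, real_inner_smul_right]
  nlinarith [mul_nonneg hζ (mul_nonneg (norm_nonneg a) (neg_le_iff_add_nonneg.1 hab))]

variable [CompleteSpace E]

noncomputable def gdamField (f g : E → ℝ) (ζ : ℝ) (x : E) : E :=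
  -(‖gradient f x‖⁻¹ • gradient f x) - ζ • (‖gradient g x‖⁻¹ • gradient g x)

theorem inner_gradient_smul_gdamField_le (f g : E → ℝ) {ζ : ℝ} (hζ : 0 ≤ ζ) (x : E) :
    ⟪gradient f x, ‖gradient f x‖ • gdamField f g ζ x⟫ ≤ -(1 - ζ) * ‖gradient f x‖ ^ 2 :=
  inner_smul_neg_normalize_sub_le _ _ hζ

theorem ContDiff.continuous_gradient {f : E → ℝ} (hf : ContDiff ℝ 1 f) :
    Continuous (gradient f) :=
  (InnerProductSpace.toDual ℝ E).symm.continuous.comp (hf.continuous_fderiv one_ne_zero)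

theorem sub_le_integral_of_ySystem {f g : E → ℝ} (hf : ContDiff ℝ 1 f) {ζ : ℝ} (hζ : 0 ≤ ζ)
    {y : ℝ → E}
    (hy : ∀ τ, 0 ≤ τ → HasDerivAt y (‖gradient f (y τ)‖ • gdamField f g ζ (y τ)) τ)
    {T : ℝ} (hT : 0 ≤ T) :
    f (y T) - f (y 0) ≤ ∫ t in 0..T, -(1 - ζ) * ‖gradient f (y t)‖ ^ 2 := by
  have hyc : ContinuousOn y (Icc 0 T) := fun t ht => (hy t ht.1).continuousAt.continuousWithinAt
  refine intervalIntegral.sub_le_integral_of_hasDeriv_right_of_le hT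
    (hf.continuous.comp_continuousOn hyc) (fun t ht => ?_)
    ((continuousOn_const.mul
      ((hf.continuous_gradient.comp_continuousOn hyc).norm.pow 2)).integrableOn_Icc)
    (fun t _ => inner_gradient_smul_gdamField_le f g hζ (y t))
  exact (((hf.differentiable one_ne_zero) (y t)).hasGradientAt.hasFDerivAt.comp_hasDerivAt t
    (hy t ht.1.le)).hasDerivWithinAt

end GDAM

theorem gdam_global_convergence_general {n : ℕ}
    (f g : EuclideanSpace ℝ (Fin n) → ℝ)
    (hf : ContDiff ℝ 2 f)
    (ζ : ℝ) (hζ : ζ ∈ Set.Ico (0 : ℝ) 1)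
    (y : ℝ → EuclideanSpace ℝ (Fin n))
    (hy : ∀ τ : ℝ, 0 ≤ τ → HasDerivAt y
      (‖gradient f (y τ)‖ •
        (-(‖gradient f (y τ)‖⁻¹ • gradient f (y τ))
          - ζ • (‖gradient g (y τ)‖⁻¹ • gradient g (y τ)))) τ)
    (M : ℝ)
    (hbound : ∀ τ : ℝ, 0 ≤ τ → f (y 0) - M ≤ f (y τ))
    (l : ℝ)
    (hlip : ∀ τ' τ'' : ℝ, 0 ≤ τ' → 0 ≤ τ'' →
      |‖gradient f (y τ')‖ - ‖gradient f (y τ'')‖| ≤ l * |τ' - τ''|) :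
    Tendsto (fun τ => ‖gradient f (y τ)‖) atTop (nhds 0) := by
  obtain ⟨hζ0, hζ1⟩ := hζ
  have hlip' : LipschitzOnWith l.toNNReal (fun τ => ‖gradient f (y τ)‖) (Ici 0) :=
    LipschitzOnWith.of_dist_le_mul fun s hs t ht => by
      simpa only [Real.dist_eq] using
        (hlip s t hs ht).trans (mul_le_mul_of_nonneg_right (Real.le_coe_toNNReal l) (abs_nonneg _))
  refine tendsto_atTop_zero_of_lipschitzOnWith_of_integral_sq_le hlip' (C := M / (1 - ζ))
    fun T hT => ?_
  have hdescent := sub_le_integral_of_ySystem (hf.of_le (by norm_num)) hζ0 hy hT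
  rw [intervalIntegral.integral_const_mul] at hdescent
  rw [le_div_iff₀ (sub_pos.2 hζ1)]
  linarith [hbound T hT]

/-- Global convergence to critical points: along the Y-system,
if `f` is bounded below along the trajectory and `τ ↦ ‖∇f(y(τ))‖` is Lipschitz,
then `‖∇f(y(τ))‖ → 0` as `τ → ∞`. -/
theorem gdam_global_convergence {n : ℕ}
    (f g : EuclideanSpace ℝ (Fin n) → ℝ)
    (hf : ContDiff ℝ 2 f) (hg : ContDiff ℝ 2 g)
    (ζ : ℝ) (hζ : ζ ∈ Set.Ico (0 : ℝ) 1)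
    (y : ℝ → EuclideanSpace ℝ (Fin n))
    (hgf : ∀ τ : ℝ, 0 ≤ τ → gradient f (y τ) ≠ 0)
    (hgg : ∀ τ : ℝ, 0 ≤ τ → gradient g (y τ) ≠ 0)
    (hy : ∀ τ : ℝ, 0 ≤ τ → HasDerivAt y
      (‖gradient f (y τ)‖ •
        (-(‖gradient f (y τ)‖⁻¹ • gradient f (y τ))
          - ζ • (‖gradient g (y τ)‖⁻¹ • gradient g (y τ)))) τ)
    (M : ℝ) (hM : 0 < M)
    (hbound : ∀ τ : ℝ, 0 ≤ τ → f (y 0) - M ≤ f (y τ))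
    (l : ℝ) (hl : 0 < l)
    (hlip : ∀ τ' τ'' : ℝ, 0 ≤ τ' → 0 ≤ τ'' →
      |‖gradient f (y τ')‖ - ‖gradient f (y τ'')‖| ≤ l * |τ' - τ''|) :
    Tendsto (fun τ => ‖gradient f (y τ)‖) atTop (nhds 0) :=
  gdam_global_convergence_general f g hf ζ hζ y hy M hbound l hlip
end
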